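/- arXiv:2505.07789 — 2 statements merged into one kernel-verified Lean document; each statement's English description precedes it below -/
import Mathlib

section
/- Let A = (A,∧,∨,·,1,∼,−,¬) be a complete perfect distributive quasi relation algebra. Define on J∞(A): I₁ = {i ∈ J∞(A) : i ≤ 1}; a ≼ b iff b ≤ a; c ∈ a∘b iff c ≤ a·b; a^∼ = ∼κ(a); a^− = −κ(a); a^¬ = ¬κ(a). Then A_+ = (J∞(A), I₁, ≼, ∘, ∼, −, ¬) is a DqRA-frame; in particular a^{¬¬} = a, the map a ↦ a^¬ is order-reversing with respect to ≼, and c^− ≤ a·b ⟺ c^¬ ≤ b^{∼¬}·a^{∼¬} for all a,b,c ∈ J∞(A). -/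
/-- An involutive FL-algebra (InFL-algebra) structure on a lattice:
a monoid operation with residuation law (Res) expressed via the two
linear negations `lneg` (∼) and `rneg` (−), which are inverse involutions. -/
structure InFL (A : Type*) [Lattice A] where
  mul : A → A → A
  one : A
  mul_assoc : ∀ a b c : A, mul (mul a b) c = mul a (mul b c)
  one_mul : ∀ a : A, mul one a = a
  mul_one : ∀ a : A, mul a one = a
  lneg : A → A
  rneg : A → A
  res_left : ∀ a b c : A, mul a b ≤ c ↔ a ≤ rneg (mul b (lneg c))
  res_right : ∀ a b c : A, mul a b ≤ c ↔ b ≤ lneg (mul (rneg c) a)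
  rneg_lneg : ∀ a : A, rneg (lneg a) = a
  lneg_rneg : ∀ a : A, lneg (rneg a) = a

/-- The sum operation `a + b := −(∼b · ∼a)` of an InFL-algebra. -/
def InFL.sum {A : Type*} [Lattice A] (S : InFL A) (a b : A) : A :=
  S.rneg (S.mul (S.lneg b) (S.lneg a))

/-- A quasi relation algebra: a De Morgan InFL-algebra satisfying (Dp):
`¬(a·b) = ¬a + ¬b`. -/
structure QRA (A : Type*) [Lattice A] extends InFL A where
  neg : A → A
  neg_neg : ∀ a : A, neg (neg a) = a
  dm : ∀ a b : A, neg (a ⊓ b) = neg a ⊔ neg b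
  dp : ∀ a b : A, neg (mul a b) = rneg (mul (lneg (neg b)) (lneg (neg a)))

/-- Completely join-irreducible element of a complete lattice. -/
def CJI {A : Type*} [CompleteLattice A] (j : A) : Prop :=
  ∀ S : Set A, j = sSup S → j ∈ S

/-- Completely meet-irreducible element of a complete lattice. -/
def CMI {A : Type*} [CompleteLattice A] (m : A) : Prop :=
  ∀ S : Set A, m = sInf S → m ∈ S

/-- A complete lattice is perfect if the completely join-irreducibles are join-dense
and the completely meet-irreducibles are meet-dense. -/
def PerfectLattice (A : Type*) [CompleteLattice A] : Prop :=
  ∀ a : A, a = sSup {j | CJI j ∧ j ≤ a} ∧ a = sInf {m | CMI m ∧ a ≤ m}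

/-- The map `κ(j) = ⋁ {a : j ≰ a}`. -/
def kappa {A : Type*} [CompleteLattice A] (j : A) : A :=
  sSup {a | ¬ j ≤ a}

/-- Extension of a binary set-operation `c : W → W → Set W` to subsets:
`U ∘ V = ⋃ { x ∘ y : x ∈ U, y ∈ V }`. -/
def setComp {W : Type*} (c : W → W → Set W) (U V : Set W) : Set W :=
  {z | ∃ x ∈ U, ∃ y ∈ V, z ∈ c x y}

/-- A DInFL-frame `(W, I, ≼, ∘, ∼, −)`. -/
structure DInFLFrame (W : Type*) where
  I : Set W
  le : W → W → Prop
  le_refl : ∀ x, le x x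
  le_trans : ∀ x y z, le x y → le y z → le x z
  le_antisymm : ∀ x y, le x y → le y x → x = y
  comp : W → W → Set W
  tld : W → W
  mns : W → W
  ax1 : ∀ x y, (le x y ↔ y ∈ setComp comp I {x}) ∧ (le x y ↔ y ∈ setComp comp {x} I)
  ax2 : ∀ x y, le x y → x ∈ I → y ∈ I
  ax3 : ∀ u v x y, le x y → x ∈ comp u v → y ∈ comp u v
  ax4 : ∀ x y z, setComp comp (comp x y) {z} = setComp comp {x} (comp y z)
  ax5 : ∀ x y z, tld z ∈ comp x y ↔ mns y ∈ comp z x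
  ax6 : ∀ x, le (mns (tld x)) x ∧ le (tld (mns x)) x

/-- Upsets of the underlying poset of a DInFL-frame. -/
def DInFLFrame.IsUpset {W : Type*} (F : DInFLFrame W) (U : Set W) : Prop :=
  ∀ x y, F.le x y → x ∈ U → y ∈ U

/-- The operation `∼U = {w : w⁻ ∉ U}` of the complex algebra. -/
def DInFLFrame.sneg {W : Type*} (F : DInFLFrame W) (U : Set W) : Set W :=
  {w | F.mns w ∉ U}

/-- The operation `−U = {w : w^∼ ∉ U}` of the complex algebra. -/
def DInFLFrame.mneg {W : Type*} (F : DInFLFrame W) (U : Set W) : Set W :=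
  {w | F.tld w ∉ U}

/-- A DqRA-frame: a DInFL-frame with a De Morgan operation `ng` (¬) satisfying
(7) `x^{¬¬} = x`, (8) `¬` is order-reversing, and
(9) `z⁻ ∈ x∘y ⟺ z^¬ ∈ y^{∼¬} ∘ x^{∼¬}`. -/
structure DqRAFrame (W : Type*) extends DInFLFrame W where
  ng : W → W
  ax7 : ∀ x, ng (ng x) = x
  ax8 : ∀ x y, le x y → le (ng y) (ng x)
  ax9 : ∀ x y z, mns z ∈ comp x y ↔ ng z ∈ comp (ng (tld y)) (ng (tld x))

/-- The operation `¬U = {x : x^¬ ∉ U}` of the complex algebra of a DqRA-frame. -/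
def DqRAFrame.nneg {W : Type*} (F : DqRAFrame W) (U : Set W) : Set W :=
  {x | F.ng x ∉ U}


/-!
In a perfect distributive lattice every completely join-irreducible `j` forms a splitting pair
with `κ(j)`: `j ≰ x ↔ x ≤ κ(j)`. This is where distributivity enters: completely meet-irreducibles
are meet-prime, and meet-density produces one above everything strictly below `j` but not above `j`.
The negations `∼`, `−`, `¬` are order-reversing bijections, so they send the splitting pair
`(j, κ j)` to the splitting pair `(∼κ j, ∼j)`; hence `∼κ(j)` is again completely join-irreducible
and `κ(∼κ j) = ∼j`, which gives the involution axioms of the frame. The axioms on `∘` hold because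
`·` preserves arbitrary joins, so by join-density and complete join-primeness any
`c ≤ a·b` with `c ∈ J∞(A)` is witnessed by join-irreducibles below `a` and `b`.
-/

section SplittingPair

variable {A : Type*}

/-- `A` is the disjoint union of the principal filter of `j` and the principal ideal of `t`. -/
def IsSplittingPair [Preorder A] (j t : A) : Prop :=
  ∀ x, ¬ j ≤ x ↔ x ≤ t

namespace IsSplittingPair

theorem map [Preorder A] {j t : A} {f g : A → A} (hf : ∀ x y, f x ≤ y ↔ g y ≤ x)
    (hg : ∀ x y, x ≤ f y ↔ y ≤ g x) (h : IsSplittingPair j t) :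
    IsSplittingPair (f t) (f j) := fun x => by
  rw [hf, ← h, not_not, hg]

variable [CompleteLattice A] {j t : A}

theorem exists_le_of_le_sSup (h : IsSplittingPair j t) {S : Set A} (hS : j ≤ sSup S) :
    ∃ s ∈ S, j ≤ s := by
  by_contra! hS'
  exact (h t).2 le_rfl (hS.trans (sSup_le fun s hs => (h s).1 (hS' s hs)))

theorem cji (h : IsSplittingPair j t) : CJI j := fun S hS => by
  obtain ⟨s, hs, hjs⟩ := h.exists_le_of_le_sSup hS.le
  rwa [le_antisymm hjs (hS ▸ le_sSup hs)]

theorem kappa_eq (h : IsSplittingPair j t) : kappa j = t :=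
  le_antisymm (sSup_le fun x hx => (h x).1 hx) (le_sSup ((h t).2 le_rfl))

end IsSplittingPair

end SplittingPair

section Kappa

variable {A : Type*} [CompleteLattice A]

theorem kappa_mono : Monotone (kappa : A → A) := fun _ _ h =>
  sSup_le_sSup fun _ hx hax => hx (h.trans hax)

theorem CMI.le_or_le_of_inf_le (hdist : ∀ a b c : A, a ⊓ (b ⊔ c) = (a ⊓ b) ⊔ (a ⊓ c))
    {m x y : A} (hm : CMI m) (h : x ⊓ y ≤ m) : x ≤ m ∨ y ≤ m := by
  let : DistribLattice A := DistribLattice.ofInfSupLe fun a b c => (hdist a b c).le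
  have hm' : m = sInf {m ⊔ x, m ⊔ y} := by
    rw [sInf_pair, ← sup_inf_left, sup_eq_left.2 h]
  rcases hm _ hm' with hx | hy
  · exact .inl (sup_eq_left.1 hx.symm)
  · exact .inr (sup_eq_left.1 hy.symm)

theorem CJI.not_le_kappa (hmeet : ∀ a : A, a = sInf {m | CMI m ∧ a ≤ m})
    (hdist : ∀ a b c : A, a ⊓ (b ⊔ c) = (a ⊓ b) ⊔ (a ⊓ c)) {j : A} (hj : CJI j) :
    ¬ j ≤ kappa j := by
  have hbelow : ¬ j ≤ sSup (Set.Iio j) := fun h =>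
    lt_irrefl j (hj (Set.Iio j) (le_antisymm h (sSup_le fun _ hx => le_of_lt hx)))
  obtain ⟨m, ⟨hm, hbm⟩, hjm⟩ : ∃ m, (CMI m ∧ sSup (Set.Iio j) ≤ m) ∧ ¬ j ≤ m := by
    by_contra! h
    exact hbelow ((le_sInf h).trans (hmeet _).ge)
  refine fun hjk => hjm (hjk.trans (sSup_le fun x hx => ?_))
  have hjx : j ⊓ x ≤ m :=
    (le_sSup (s := Set.Iio j) (inf_le_left.lt_of_ne fun he => hx (inf_eq_left.1 he))).trans hbm
  exact (hm.le_or_le_of_inf_le hdist hjx).resolve_left hjm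

theorem CJI.isSplittingPair_kappa (hmeet : ∀ a : A, a = sInf {m | CMI m ∧ a ≤ m})
    (hdist : ∀ a b c : A, a ⊓ (b ⊔ c) = (a ⊓ b) ⊔ (a ⊓ c)) {j : A} (hj : CJI j) :
    IsSplittingPair j (kappa j) :=
  fun _ => ⟨fun h => le_sSup h, fun h hjx => hj.not_le_kappa hmeet hdist (hjx.trans h)⟩

end Kappa

namespace InFL

variable {A : Type*}

section Lattice

variable [Lattice A] (S : InFL A) {a b c : A}

theorem mul_le_mul_left (h : b ≤ c) (a : A) : S.mul b a ≤ S.mul c a :=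
  (S.res_left b a _).2 (h.trans ((S.res_left c a _).1 le_rfl))

theorem mul_le_mul_right (h : b ≤ c) (a : A) : S.mul a b ≤ S.mul a c :=
  (S.res_right a b _).2 (h.trans ((S.res_right a c _).1 le_rfl))

theorem le_lneg_iff_mul_le : b ≤ S.lneg a ↔ S.mul a b ≤ S.lneg S.one := by
  rw [S.res_right, S.rneg_lneg, S.one_mul]

theorem le_rneg_iff_mul_le : a ≤ S.rneg b ↔ S.mul a b ≤ S.rneg S.one := by
  rw [S.res_left, S.lneg_rneg, S.mul_one]

theorem lneg_antitone : Antitone S.lneg := fun _ _ h =>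
  S.le_lneg_iff_mul_le.2 ((S.mul_le_mul_left h _).trans (S.le_lneg_iff_mul_le.1 le_rfl))

theorem rneg_antitone : Antitone S.rneg := fun _ _ h =>
  S.le_rneg_iff_mul_le.2 ((S.mul_le_mul_right h _).trans (S.le_rneg_iff_mul_le.1 le_rfl))

theorem lneg_le_iff : S.lneg a ≤ b ↔ S.rneg b ≤ a :=
  ⟨fun h => S.rneg_lneg a ▸ S.rneg_antitone h, fun h => S.lneg_rneg b ▸ S.lneg_antitone h⟩

theorem le_lneg_iff : a ≤ S.lneg b ↔ b ≤ S.rneg a :=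
  ⟨fun h => S.rneg_lneg b ▸ S.rneg_antitone h, fun h => S.lneg_rneg a ▸ S.lneg_antitone h⟩

theorem rneg_le_iff : S.rneg a ≤ b ↔ S.lneg b ≤ a :=
  ⟨fun h => S.lneg_rneg a ▸ S.lneg_antitone h, fun h => S.rneg_lneg b ▸ S.rneg_antitone h⟩

theorem le_rneg_iff : a ≤ S.rneg b ↔ b ≤ S.lneg a :=
  ⟨fun h => S.lneg_rneg b ▸ S.lneg_antitone h, fun h => S.rneg_lneg a ▸ S.rneg_antitone h⟩

theorem lneg_le_lneg_iff : S.lneg a ≤ S.lneg b ↔ b ≤ a := by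
  rw [S.lneg_le_iff, S.rneg_lneg]

theorem lneg_mul (a b : A) : S.lneg (S.mul a b) = S.sum (S.lneg b) (S.lneg a) :=
  eq_of_forall_le_iff fun c => by
    rw [InFL.sum, S.le_rneg_iff, S.res_right, S.rneg_lneg, S.lneg_le_lneg_iff, S.res_right,
      S.rneg_lneg, S.lneg_le_lneg_iff, S.res_right, S.rneg_lneg]

end Lattice

section CompleteLattice

variable [CompleteLattice A] (S : InFL A)

theorem sSup_mul (T : Set A) (a : A) : S.mul (sSup T) a = sSup ((S.mul · a) '' T) :=
  le_antisymm
    ((S.res_left _ a _).2 (sSup_le fun _ hs => (S.res_left _ a _).1 (le_sSup ⟨_, hs, rfl⟩)))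
    (sSup_le (Set.forall_mem_image.2 fun _ hs => S.mul_le_mul_left (le_sSup hs) a))

theorem mul_sSup (a : A) (T : Set A) : S.mul a (sSup T) = sSup ((S.mul a ·) '' T) :=
  le_antisymm
    ((S.res_right a _ _).2 (sSup_le fun _ hs => (S.res_right a _ _).1 (le_sSup ⟨_, hs, rfl⟩)))
    (sSup_le (Set.forall_mem_image.2 fun _ hs => S.mul_le_mul_right (le_sSup hs) a))

theorem isSplittingPair_lneg_kappa (hperf : PerfectLattice A)
    (hdist : ∀ a b c : A, a ⊓ (b ⊔ c) = (a ⊓ b) ⊔ (a ⊓ c)) {j : A} (hj : CJI j) :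
    IsSplittingPair (S.lneg (kappa j)) (S.lneg j) :=
  (hj.isSplittingPair_kappa (fun a => (hperf a).2) hdist).map
    (fun _ _ => S.lneg_le_iff) (fun _ _ => S.le_lneg_iff)

theorem isSplittingPair_rneg_kappa (hperf : PerfectLattice A)
    (hdist : ∀ a b c : A, a ⊓ (b ⊔ c) = (a ⊓ b) ⊔ (a ⊓ c)) {j : A} (hj : CJI j) :
    IsSplittingPair (S.rneg (kappa j)) (S.rneg j) :=
  (hj.isSplittingPair_kappa (fun a => (hperf a).2) hdist).map
    (fun _ _ => S.rneg_le_iff) (fun _ _ => S.le_rneg_iff)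

theorem rneg_kappa_lneg_kappa (hperf : PerfectLattice A)
    (hdist : ∀ a b c : A, a ⊓ (b ⊔ c) = (a ⊓ b) ⊔ (a ⊓ c)) {j : A} (hj : CJI j) :
    S.rneg (kappa (S.lneg (kappa j))) = j := by
  rw [(S.isSplittingPair_lneg_kappa hperf hdist hj).kappa_eq, S.rneg_lneg]

theorem lneg_kappa_rneg_kappa (hperf : PerfectLattice A)
    (hdist : ∀ a b c : A, a ⊓ (b ⊔ c) = (a ⊓ b) ⊔ (a ⊓ c)) {j : A} (hj : CJI j) :
    S.lneg (kappa (S.rneg (kappa j))) = j := by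
  rw [(S.isSplittingPair_rneg_kappa hperf hdist hj).kappa_eq, S.lneg_rneg]

theorem lneg_kappa_le_mul_iff (hperf : PerfectLattice A)
    (hdist : ∀ a b c : A, a ⊓ (b ⊔ c) = (a ⊓ b) ⊔ (a ⊓ c)) (a : A) {b c : A} (hb : CJI b)
    (hc : CJI c) : S.lneg (kappa c) ≤ S.mul a b ↔ S.rneg (kappa b) ≤ S.mul c a := by
  have hsplit {j : A} (hj : CJI j) := hj.isSplittingPair_kappa (fun a => (hperf a).2) hdist
  rw [S.lneg_le_iff, ← hsplit hc, S.rneg_le_iff, ← hsplit hb, not_iff_not, S.le_lneg_iff,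
    S.res_left, S.lneg_rneg]

theorem le_mul_iff_exists_cji_left (hperf : PerfectLattice A)
    (hdist : ∀ a b c : A, a ⊓ (b ⊔ c) = (a ⊓ b) ⊔ (a ⊓ c)) {c : A} (hc : CJI c) (t a : A) :
    c ≤ S.mul t a ↔ ∃ p : {x : A // CJI x}, p.1 ≤ t ∧ c ≤ S.mul p.1 a := by
  refine ⟨fun h => ?_, fun ⟨p, hpt, hcp⟩ => hcp.trans (S.mul_le_mul_left hpt a)⟩
  rw [(hperf t).1, S.sSup_mul] at h
  obtain ⟨_, ⟨p, ⟨hp, hpt⟩, rfl⟩, hcp⟩ :=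
    (hc.isSplittingPair_kappa (fun a => (hperf a).2) hdist).exists_le_of_le_sSup h
  exact ⟨⟨p, hp⟩, hpt, hcp⟩

theorem le_mul_iff_exists_cji_right (hperf : PerfectLattice A)
    (hdist : ∀ a b c : A, a ⊓ (b ⊔ c) = (a ⊓ b) ⊔ (a ⊓ c)) {c : A} (hc : CJI c) (a t : A) :
    c ≤ S.mul a t ↔ ∃ q : {x : A // CJI x}, q.1 ≤ t ∧ c ≤ S.mul a q.1 := by
  refine ⟨fun h => ?_, fun ⟨q, hqt, hcq⟩ => hcq.trans (S.mul_le_mul_right hqt a)⟩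
  rw [(hperf t).1, S.mul_sSup] at h
  obtain ⟨_, ⟨q, ⟨hq, hqt⟩, rfl⟩, hcq⟩ :=
    (hc.isSplittingPair_kappa (fun a => (hperf a).2) hdist).exists_le_of_le_sSup h
  exact ⟨⟨q, hq⟩, hqt, hcq⟩

end CompleteLattice

end InFL

namespace QRA

variable {A : Type*}

section Lattice

variable [Lattice A] (Q : QRA A) {a b : A}

theorem neg_antitone : Antitone Q.neg := fun a b h => by
  have h' := Q.dm a b
  rw [inf_eq_left.2 h] at h'
  exact h' ▸ le_sup_right

theorem neg_le_iff : Q.neg a ≤ b ↔ Q.neg b ≤ a :=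
  ⟨fun h => Q.neg_neg a ▸ Q.neg_antitone h, fun h => Q.neg_neg b ▸ Q.neg_antitone h⟩

theorem le_neg_iff : a ≤ Q.neg b ↔ b ≤ Q.neg a :=
  ⟨fun h => Q.neg_neg b ▸ Q.neg_antitone h, fun h => Q.neg_neg a ▸ Q.neg_antitone h⟩

end Lattice

variable [CompleteLattice A] (Q : QRA A)

theorem isSplittingPair_neg_kappa (hperf : PerfectLattice A)
    (hdist : ∀ a b c : A, a ⊓ (b ⊔ c) = (a ⊓ b) ⊔ (a ⊓ c)) {j : A} (hj : CJI j) :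
    IsSplittingPair (Q.neg (kappa j)) (Q.neg j) :=
  (hj.isSplittingPair_kappa (fun a => (hperf a).2) hdist).map
    (fun _ _ => Q.neg_le_iff) (fun _ _ => Q.le_neg_iff)

theorem neg_kappa_neg_kappa (hperf : PerfectLattice A)
    (hdist : ∀ a b c : A, a ⊓ (b ⊔ c) = (a ⊓ b) ⊔ (a ⊓ c)) {j : A} (hj : CJI j) :
    Q.neg (kappa (Q.neg (kappa j))) = j := by
  rw [(Q.isSplittingPair_neg_kappa hperf hdist hj).kappa_eq, Q.neg_neg]

theorem rneg_kappa_le_mul_iff (hperf : PerfectLattice A)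
    (hdist : ∀ a b c : A, a ⊓ (b ⊔ c) = (a ⊓ b) ⊔ (a ⊓ c)) {a b : A} (ha : CJI a) (hb : CJI b)
    (c : A) :
    Q.rneg (kappa c) ≤ Q.mul a b ↔
      Q.neg (kappa c) ≤
        Q.mul (Q.neg (kappa (Q.lneg (kappa b)))) (Q.neg (kappa (Q.lneg (kappa a)))) := by
  rw [(Q.isSplittingPair_lneg_kappa hperf hdist ha).kappa_eq,
    (Q.isSplittingPair_lneg_kappa hperf hdist hb).kappa_eq, Q.rneg_le_iff, Q.neg_le_iff, Q.dp,
    Q.neg_neg, Q.neg_neg, Q.lneg_mul, InFL.sum]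

end QRA

section SetComp

variable {W : Type*} {c : W → W → Set W} {U : Set W} {x z : W}

theorem mem_setComp_singleton_right : z ∈ setComp c U {x} ↔ ∃ u ∈ U, z ∈ c u x := by
  simp [setComp]

theorem mem_setComp_singleton_left : z ∈ setComp c {x} U ↔ ∃ u ∈ U, z ∈ c x u := by
  simp [setComp]

end SetComp

section DualFrame

variable {A : Type*} [CompleteLattice A]

def dualFrame (Q : QRA A) (hperf : PerfectLattice A)
    (hdist : ∀ a b c : A, a ⊓ (b ⊔ c) = (a ⊓ b) ⊔ (a ⊓ c)) : DqRAFrame {a : A // CJI a} where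
  I := {i | i.1 ≤ Q.one}
  le a b := b.1 ≤ a.1
  le_refl _ := le_rfl
  le_trans _ _ _ hxy hyz := hyz.trans hxy
  le_antisymm _ _ hxy hyx := Subtype.ext (le_antisymm hyx hxy)
  comp a b := {c | c.1 ≤ Q.mul a.1 b.1}
  tld a := ⟨Q.lneg (kappa a.1), (Q.isSplittingPair_lneg_kappa hperf hdist a.2).cji⟩
  mns a := ⟨Q.rneg (kappa a.1), (Q.isSplittingPair_rneg_kappa hperf hdist a.2).cji⟩
  ng a := ⟨Q.neg (kappa a.1), (Q.isSplittingPair_neg_kappa hperf hdist a.2).cji⟩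
  ax1 x y := by
    rw [mem_setComp_singleton_right, mem_setComp_singleton_left]
    exact ⟨Iff.trans (by rw [Q.one_mul]) (Q.le_mul_iff_exists_cji_left hperf hdist y.2 Q.one x.1),
      Iff.trans (by rw [Q.mul_one]) (Q.le_mul_iff_exists_cji_right hperf hdist y.2 x.1 Q.one)⟩
  ax2 _ _ hxy hx := hxy.trans hx
  ax3 _ _ _ _ hxy hx := hxy.trans hx
  ax4 x y z := by
    ext w
    rw [mem_setComp_singleton_right, mem_setComp_singleton_left]
    exact (Q.le_mul_iff_exists_cji_left hperf hdist w.2 _ z.1).symm.trans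
      (Q.mul_assoc x.1 y.1 z.1 ▸ Q.le_mul_iff_exists_cji_right hperf hdist w.2 x.1 _)
  ax5 x y z := Q.lneg_kappa_le_mul_iff hperf hdist x.1 y.2 z.2
  ax6 x := ⟨(Q.rneg_kappa_lneg_kappa hperf hdist x.2).ge,
    (Q.lneg_kappa_rneg_kappa hperf hdist x.2).ge⟩
  ax7 x := Subtype.ext (Q.neg_kappa_neg_kappa hperf hdist x.2)
  ax8 _ _ h := Q.neg_antitone (kappa_mono h)
  ax9 x y z := Q.rneg_kappa_le_mul_iff hperf hdist x.2 y.2 z.1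

end DualFrame

/-- The dual structure `A₊ = (J∞(A), I₁, ≼, ∘, ∼, −, ¬)` of a complete perfect
distributive quasi relation algebra is a DqRA-frame, with `a^¬ = ¬κ(a)`; in
particular `a^{¬¬} = a`, `¬` is order-reversing w.r.t. `≼`, and
`c^− ≤ a·b ⟺ c^¬ ≤ b^{∼¬}·a^{∼¬}` for completely join-irreducible `a,b,c`. -/
theorem dual_frame_of_perfect_DqRA {A : Type*} [CompleteLattice A]
    (Q : QRA A) (hperf : PerfectLattice A)
    (hdist : ∀ a b c : A, a ⊓ (b ⊔ c) = (a ⊓ b) ⊔ (a ⊓ c)) :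
    (∃ F : DqRAFrame {a : A // CJI a},
      F.I = {i | i.1 ≤ Q.one} ∧
      (∀ a b, F.le a b ↔ b.1 ≤ a.1) ∧
      (∀ a b c, c ∈ F.comp a b ↔ c.1 ≤ Q.mul a.1 b.1) ∧
      (∀ a, (F.tld a).1 = Q.lneg (kappa a.1)) ∧
      (∀ a, (F.mns a).1 = Q.rneg (kappa a.1)) ∧
      (∀ a, (F.ng a).1 = Q.neg (kappa a.1))) ∧
    (∀ a : A, CJI a → Q.neg (kappa (Q.neg (kappa a))) = a) ∧
    (∀ a b : A, CJI a → CJI b → b ≤ a → Q.neg (kappa a) ≤ Q.neg (kappa b)) ∧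
    (∀ a b c : A, CJI a → CJI b → CJI c →
      (Q.rneg (kappa c) ≤ Q.mul a b ↔
        Q.neg (kappa c) ≤
          Q.mul (Q.neg (kappa (Q.lneg (kappa b)))) (Q.neg (kappa (Q.lneg (kappa a)))))) :=
  ⟨⟨dualFrame Q hperf hdist, rfl, fun _ _ => .rfl, fun _ _ _ => .rfl, fun _ => rfl, fun _ => rfl,
      fun _ => rfl⟩,
    fun _ ha => Q.neg_kappa_neg_kappa hperf hdist ha,
    fun _ _ _ _ h => Q.neg_antitone (kappa_mono h),
    fun _ _ c ha hb _ => Q.rneg_kappa_le_mul_iff hperf hdist ha hb c⟩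
end

section
/- If W = (W, I, ≼, ∘, ∼, −, ¬) is a DqRA-frame, then the map x ↦ ↑x = {y ∈ W : x ≼ y} is an isomorphism from W onto the dual frame (W^+)_+ of its complex algebra; in particular, in addition to being an order-isomorphism preserving I, ∘, ∼ and −, it satisfies ↑(x^¬) = (↑x)^¬. -/
/-- The principal upset `↑x = {y : x ≼ y}`. -/
def DInFLFrame.up {W : Type*} (F : DInFLFrame W) (x : W) : Set W :=
  {y | F.le x y}

/-- `U` is a completely join-irreducible element of the complete lattice of
upsets of the frame (where joins of upsets are unions). -/
def DInFLFrame.IsCJIUpset {W : Type*} (F : DInFLFrame W) (U : Set W) : Prop :=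
  F.IsUpset U ∧ ∀ 𝒮 : Set (Set W), (∀ V ∈ 𝒮, F.IsUpset V) → U = ⋃₀ 𝒮 → U ∈ 𝒮

/-- `κ(↑x) = ⋃ {U ∈ Up(W) : ↑x ⊄ U}`, computed in the complex algebra. -/
def DInFLFrame.kappaUp {W : Type*} (F : DInFLFrame W) (x : W) : Set W :=
  ⋃₀ {U | F.IsUpset U ∧ ¬ F.up x ⊆ U}

/-!
By (1), `x ≼ y` means `y ∈ i ∘ x` (equivalently `y ∈ x ∘ i`) for some `i ∈ I`. With (3) and (4)
this makes `∘` antitone in each argument, so `z ∈ x ∘ y` iff `↑z ⊆ ↑x ∘ ↑y`; with (5) it makes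
`∼` and `−` mutually inverse, antitone and Galois-connected: `x^− ≼ y ↔ y^∼ ≼ x`.
Since `κ(↑x) = {y : y ⋠ x}`, the upsets `∼κ(↑x)`, `−κ(↑x)`, `¬κ(↑x)` are
`{w : w^− ≼ x}`, `{w : w^∼ ≼ x}`, `{w : w^¬ ≼ x}`, which the Galois connection and the
involutive antitone `¬` identify with `↑x^∼`, `↑x^−`, `↑x^¬`.
-/

namespace DInFLFrame

variable {W : Type*} (F : DInFLFrame W)

lemma le_iff_exists_comp_left {x y : W} : F.le x y ↔ ∃ i ∈ F.I, y ∈ F.comp i x := by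
  rw [(F.ax1 x y).1]
  constructor
  · rintro ⟨i, hi, _, rfl, h⟩
    exact ⟨i, hi, h⟩
  · rintro ⟨i, hi, h⟩
    exact ⟨i, hi, x, rfl, h⟩

lemma le_iff_exists_comp_right {x y : W} : F.le x y ↔ ∃ i ∈ F.I, y ∈ F.comp x i := by
  rw [(F.ax1 x y).2]
  constructor
  · rintro ⟨_, rfl, i, hi, h⟩
    exact ⟨i, hi, h⟩
  · rintro ⟨i, hi, h⟩
    exact ⟨x, rfl, i, hi, h⟩

lemma mns_tld (x : W) : F.mns (F.tld x) = x := by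
  refine F.le_antisymm _ _ (F.ax6 x).1 ?_
  obtain ⟨i, hi, h⟩ := F.le_iff_exists_comp_left.1 (F.le_refl (F.tld x))
  exact F.le_iff_exists_comp_right.2 ⟨i, hi, (F.ax5 i (F.tld x) x).1 h⟩

lemma tld_mns (x : W) : F.tld (F.mns x) = x := by
  refine F.le_antisymm _ _ (F.ax6 x).2 ?_
  obtain ⟨i, hi, h⟩ := F.le_iff_exists_comp_right.1 (F.le_refl (F.mns x))
  exact F.le_iff_exists_comp_left.2 ⟨i, hi, (F.ax5 i x (F.mns x)).2 h⟩

lemma tld_le_tld {x y : W} (h : F.le x y) : F.le (F.tld y) (F.tld x) := by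
  obtain ⟨i, hi, hy⟩ := F.le_iff_exists_comp_right.1 h
  rw [← F.mns_tld y] at hy
  exact F.le_iff_exists_comp_left.2 ⟨i, hi, (F.ax5 i (F.tld y) x).2 hy⟩

lemma mns_le_mns {x y : W} (h : F.le x y) : F.le (F.mns y) (F.mns x) := by
  obtain ⟨i, hi, hy⟩ := F.le_iff_exists_comp_left.1 h
  rw [← F.tld_mns y] at hy
  exact F.le_iff_exists_comp_right.2 ⟨i, hi, (F.ax5 i x (F.mns y)).1 hy⟩

lemma mns_le_iff_tld_le {x y : W} : F.le (F.mns x) y ↔ F.le (F.tld y) x := by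
  constructor
  · intro h
    simpa only [F.tld_mns] using F.tld_le_tld h
  · intro h
    simpa only [F.mns_tld] using F.mns_le_mns h

lemma mem_comp_of_le_left {x x' y z : W} (h : F.le x x') (hz : z ∈ F.comp x' y) :
    z ∈ F.comp x y := by
  obtain ⟨i, hi, hx'⟩ := F.le_iff_exists_comp_left.1 h
  have hz' : z ∈ setComp F.comp (F.comp i x) {y} := ⟨x', hx', y, rfl, hz⟩
  rw [F.ax4] at hz'
  obtain ⟨i', hi', w, hw, hzw⟩ := hz'
  rw [Set.mem_singleton_iff.1 hi'] at hzw
  exact F.ax3 x y w z (F.le_iff_exists_comp_left.2 ⟨i, hi, hzw⟩) hw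

lemma mem_comp_of_le_right {x y y' z : W} (h : F.le y y') (hz : z ∈ F.comp x y') :
    z ∈ F.comp x y := by
  obtain ⟨i, hi, hy'⟩ := F.le_iff_exists_comp_right.1 h
  have hz' : z ∈ setComp F.comp {x} (F.comp y i) := ⟨x, rfl, y', hy', hz⟩
  rw [← F.ax4] at hz'
  obtain ⟨w, hw, i', hi', hzw⟩ := hz'
  rw [Set.mem_singleton_iff.1 hi'] at hzw
  exact F.ax3 x y w z (F.le_iff_exists_comp_right.2 ⟨i, hi, hzw⟩) hw

lemma up_isUpset (x : W) : F.IsUpset (F.up x) :=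
  fun a b hab ha => F.le_trans x a b ha hab

lemma mem_up_self (x : W) : x ∈ F.up x :=
  F.le_refl x

lemma up_subset_of_mem {U : Set W} (hU : F.IsUpset U) {x : W} (hx : x ∈ U) : F.up x ⊆ U :=
  fun y hy => hU x y hy hx

lemma up_subset_up_iff {x y : W} : F.up y ⊆ F.up x ↔ F.le x y :=
  ⟨fun h => h (F.mem_up_self y), fun h => F.up_subset_of_mem (F.up_isUpset x) h⟩

lemma up_injective : Function.Injective F.up := fun x y h =>
  F.le_antisymm x y (F.up_subset_up_iff.1 h.ge) (F.up_subset_up_iff.1 h.le)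

lemma isCJIUpset_up (x : W) : F.IsCJIUpset (F.up x) := by
  refine ⟨F.up_isUpset x, fun 𝒮 h𝒮 hx => ?_⟩
  obtain ⟨V, hV, hxV⟩ : x ∈ ⋃₀ 𝒮 := hx ▸ F.mem_up_self x
  have hVx : V ⊆ F.up x := hx ▸ Set.subset_sUnion_of_mem hV
  rwa [(F.up_subset_of_mem (h𝒮 V hV) hxV).antisymm hVx]

lemma exists_eq_up_of_isCJIUpset {U : Set W} (hU : F.IsCJIUpset U) : ∃ x, U = F.up x := by
  have hUnion : U = ⋃₀ (F.up '' U) := by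
    refine (Set.sUnion_subset ?_).antisymm' fun x hx => ⟨F.up x, ⟨x, hx, rfl⟩, F.mem_up_self x⟩
    rintro _ ⟨x, hx, rfl⟩
    exact F.up_subset_of_mem hU.1 hx
  obtain ⟨x, -, hx⟩ := hU.2 _ (by rintro _ ⟨x, -, rfl⟩; exact F.up_isUpset x) hUnion
  exact ⟨x, hx.symm⟩

lemma mem_I_iff_up_subset {x : W} : x ∈ F.I ↔ F.up x ⊆ F.I :=
  ⟨fun hx => F.up_subset_of_mem (fun a b => F.ax2 a b) hx, fun h => h (F.mem_up_self x)⟩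

lemma mem_comp_iff_up_subset {x y z : W} :
    z ∈ F.comp x y ↔ F.up z ⊆ setComp F.comp (F.up x) (F.up y) := by
  constructor
  · intro hz w hw
    exact ⟨x, F.mem_up_self x, y, F.mem_up_self y, F.ax3 x y z w hw hz⟩
  · intro h
    obtain ⟨x', hx', y', hy', hz⟩ := h (F.mem_up_self z)
    exact F.mem_comp_of_le_left hx' (F.mem_comp_of_le_right hy' hz)

lemma mem_kappaUp {x y : W} : y ∈ F.kappaUp x ↔ ¬ F.le y x := by
  constructor
  · rintro ⟨U, ⟨hU, hxU⟩, hy⟩ hyx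
    exact hxU (F.up_subset_of_mem hU (hU y x hyx hy))
  · intro h
    exact ⟨F.up y, ⟨F.up_isUpset y, fun hyx => h (hyx (F.mem_up_self x))⟩, F.mem_up_self y⟩

lemma up_tld (x : W) : F.up (F.tld x) = F.sneg (F.kappaUp x) := by
  ext w
  simp only [sneg, Set.mem_ofPred_eq, mem_kappaUp, not_not, up, mns_le_iff_tld_le]

lemma up_mns (x : W) : F.up (F.mns x) = F.mneg (F.kappaUp x) := by
  ext w
  simp only [mneg, Set.mem_ofPred_eq, mem_kappaUp, not_not, up, mns_le_iff_tld_le]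

end DInFLFrame

namespace DqRAFrame

variable {W : Type*} (F : DqRAFrame W)

lemma ng_le_comm {x y : W} (h : F.le (F.ng x) y) : F.le (F.ng y) x := by
  simpa only [F.ax7] using F.ax8 _ _ h

lemma up_ng (x : W) : F.up (F.ng x) = F.nneg (F.kappaUp x) := by
  ext w
  simp only [nneg, Set.mem_ofPred_eq, DInFLFrame.mem_kappaUp, not_not, DInFLFrame.up]
  exact ⟨F.ng_le_comm, F.ng_le_comm⟩

end DqRAFrame

/-- A DqRA-frame is isomorphic, via `x ↦ ↑x`, to the dual frame `(W⁺)₊` of its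
complex algebra: `x ↦ ↑x` is an order-isomorphism onto the completely
join-irreducible upsets which preserves `I`, `∘`, `∼`, `−`, and in addition
satisfies `↑(x^¬) = (↑x)^¬`. -/
theorem dqra_frame_iso_dual_of_complex {W : Type*} (F : DqRAFrame W) :
    (∀ x, F.toDInFLFrame.IsCJIUpset (F.toDInFLFrame.up x)) ∧
    (∀ U, F.toDInFLFrame.IsCJIUpset U → ∃ x, U = F.toDInFLFrame.up x) ∧
    Function.Injective F.toDInFLFrame.up ∧
    (∀ x y, F.le x y ↔ F.toDInFLFrame.up y ⊆ F.toDInFLFrame.up x) ∧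
    (∀ x, x ∈ F.I ↔ F.toDInFLFrame.up x ⊆ F.I) ∧
    (∀ x y z, z ∈ F.comp x y ↔
      F.toDInFLFrame.up z ⊆
        setComp F.comp (F.toDInFLFrame.up x) (F.toDInFLFrame.up y)) ∧
    (∀ x, F.toDInFLFrame.up (F.tld x) = F.toDInFLFrame.sneg (F.toDInFLFrame.kappaUp x)) ∧
    (∀ x, F.toDInFLFrame.up (F.mns x) = F.toDInFLFrame.mneg (F.toDInFLFrame.kappaUp x)) ∧
    (∀ x, F.toDInFLFrame.up (F.ng x) = F.nneg (F.toDInFLFrame.kappaUp x)) :=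
  ⟨F.isCJIUpset_up, fun _ => F.exists_eq_up_of_isCJIUpset, F.up_injective,
    fun _ _ => F.up_subset_up_iff.symm, fun _ => F.mem_I_iff_up_subset,
    fun _ _ _ => F.mem_comp_iff_up_subset, F.up_tld, F.up_mns, F.up_ng⟩
end
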